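/- Let f(Z) = c_α Z^α + c_β Z^β be a binomial (c_α, c_β ≠ 0) in the entries of a symmetric n×n matrix of variables Z such that the two monomials Z^α and Z^β have no common factor and the total degrees satisfy deg(Z^α) > deg(Z^β) ≥ 1. Then f is not psd-stable. -/

import Mathlib

open MvPolynomial

/-- Variables of a symmetric `n×n` matrix of variables: pairs `(i,j)` with `i ≤ j`. -/
abbrev SymVar (n : ℕ) := {p : Fin n × Fin n // p.1 ≤ p.2}

/-- Evaluation of a polynomial in the entries of a symmetric matrix of variables
at a complex matrix `M` (the variable `z_ij` is sent to `M i j`). -/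
noncomputable def evalMat {n : ℕ} (M : Matrix (Fin n) (Fin n) ℂ)
    (f : MvPolynomial (SymVar n) ℂ) : ℂ :=
  eval (fun v : SymVar n => M v.1.1 v.1.2) f

/-- A polynomial in the entries of a symmetric `n×n` matrix of variables is
psd-stable if it does not vanish at any complex symmetric matrix whose
entrywise imaginary part is positive definite. -/
def PsdStable {n : ℕ} (f : MvPolynomial (SymVar n) ℂ) : Prop :=
  ∀ M : Matrix (Fin n) (Fin n) ℂ, M.IsSymm → (M.map Complex.im).PosDef →
    evalMat M f ≠ 0

/-- The total degree of a monomial recorded by its exponent function: the sum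
of the exponents of all variables. -/
def mdeg {n : ℕ} (α : SymVar n →₀ ℕ) : ℕ := α.sum fun _ e => e

/-!
Replacing `M` by `t • M` with `t > 0` keeps `M` symmetric with positive definite imaginary part
and multiplies the two terms of the binomial by `t ^ deg Z^α` and `t ^ deg Z^β`. As the degrees
differ, only the arguments of the two terms matter: it suffices to find an admissible `M` at which
`cα Z^α` and `-cβ Z^β` have the same argument. Give every entry the argument `θ₁` on the support
of `α` and `θ₂` elsewhere, with moduli making `Im M = 1 + (all-ones matrix)`. Since the supports
are disjoint, `Z^α / Z^β` then has argument `deg Z^α * θ₁ - deg Z^β * θ₂`, which for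
`θ₁, θ₂ ∈ (0, π)` sweeps an interval of length `(deg Z^α + deg Z^β) π > 2π`.
-/

open Complex Set
open scoped Real

section SymMatrix

variable {n : ℕ} {R : Type*}

def symMatrix (m : SymVar n → R) : Matrix (Fin n) (Fin n) R :=
  Matrix.of fun i j => m ⟨(min i j, max i j), min_le_max⟩

lemma symMatrix_isSymm (m : SymVar n → R) : (symMatrix m).IsSymm := by
  ext i j
  simp [symMatrix, min_comm, max_comm]

lemma symMatrix_apply_var (m : SymVar n → R) (v : SymVar n) :
    symMatrix m v.1.1 v.1.2 = m v := by
  simp [symMatrix, min_eq_left v.2, max_eq_right v.2]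

lemma evalMat_symMatrix (m : SymVar n → ℂ) (f : MvPolynomial (SymVar n) ℂ) :
    evalMat (symMatrix m) f = eval m f := by
  simp only [evalMat, symMatrix_apply_var]

end SymMatrix

lemma mdeg_eq_degree {n : ℕ} (α : SymVar n →₀ ℕ) : mdeg α = α.degree := rfl

lemma eval_smul_monomial {σ : Type*} (t : ℂ) (x : σ → ℂ) (α : σ →₀ ℕ) (c : ℂ) :
    eval (t • x) (monomial α c) = t ^ α.degree * eval x (monomial α c) := by
  simp only [eval_monomial, Finsupp.prod, Pi.smul_apply, smul_eq_mul, mul_pow,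
    Finset.prod_mul_distrib, Finset.prod_pow_eq_pow_sum, Finsupp.degree_apply]
  ring

lemma exists_pos_eval_monomial_eq {σ : Type*} (α : σ →₀ ℕ) (c : ℂ) {x : σ → ℂ}
    {ρ : σ → ℝ} {θ : ℝ} (hρ : ∀ v, 0 < ρ v) (hx : ∀ v ∈ α.support, x v = ρ v * exp (θ * I)) :
    ∃ P : ℝ, 0 < P ∧ eval x (monomial α c) = c * (P * exp (α.degree * θ * I)) := by
  refine ⟨∏ v ∈ α.support, ρ v ^ α v, Finset.prod_pos fun v _ => pow_pos (hρ v) _, ?_⟩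
  rw [eval_monomial, Finsupp.prod, Finset.prod_congr rfl fun v hv => by rw [hx v hv],
    Finsupp.degree_apply]
  simp only [mul_pow, Finset.prod_mul_distrib, ← exp_nat_mul, ← exp_sum]
  push_cast
  congr 3
  rw [Finset.sum_mul, Finset.sum_mul]
  exact Finset.sum_congr rfl fun v _ => by ring

lemma posDef_one_add_ones {ι : Type*} [Fintype ι] [DecidableEq ι] :
    (1 + Matrix.of fun _ _ => (1 : ℝ) : Matrix ι ι ℝ).PosDef := by
  refine Matrix.PosDef.one.add_posSemidef ?_
  convert Matrix.posSemidef_vecMulVec_self_star (1 : ι → ℝ)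
  ext i j
  simp [Matrix.vecMulVec_apply]

lemma exists_mul_sub_mul_eq_add_int_mul_two_pi {a b : ℝ} (hab : 2 < a + b) (φ : ℝ) :
    ∃ θ₁ ∈ Ioo 0 π, ∃ θ₂ ∈ Ioo 0 π, ∃ k : ℤ, a * θ₁ - b * θ₂ = φ + 2 * π * k := by
  obtain ⟨hxl, hxu⟩ := toIocMod_mem_Ioc Real.two_pi_pos (-b * π) φ
  rw [← self_sub_toIocDiv_zsmul, zsmul_eq_mul] at hxl hxu
  set k := toIocDiv Real.two_pi_pos (-b * π) φ
  set x := φ - k * (2 * π)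
  have hxa : x < a * π := by nlinarith [Real.pi_pos]
  have hab0 : 0 < a + b := by linarith
  refine ⟨(x + b * π) / (a + b), ⟨by apply div_pos <;> linarith, ?_⟩,
    (a * π - x) / (a + b), ⟨by apply div_pos <;> linarith, ?_⟩,
    -k, ?_⟩
  · rw [div_lt_iff₀ hab0]; linarith
  · rw [div_lt_iff₀ hab0]; linarith
  · field_simp
    push_cast
    ring

lemma exists_pos_mul_add_eq_zero {cα cβ : ℂ} (hcα : cα ≠ 0) (hcβ : cβ ≠ 0) {P Q A B : ℝ}
    (hP : 0 < P) (hQ : 0 < Q) {k : ℤ} (hAB : A - B = arg (-cβ / cα) + 2 * π * k) :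
    ∃ s : ℝ, 0 < s ∧ s * (cα * (P * exp (A * I))) + cβ * (Q * exp (B * I)) = 0 := by
  set w := -cβ / cα
  have hw : w ≠ 0 := div_ne_zero (neg_ne_zero.2 hcβ) hcα
  refine ⟨‖w‖ * Q / P, by positivity, ?_⟩
  have hA : exp (A * I) = exp (B * I) * exp (arg w * I) := by
    rw [← exp_add, show A = B + arg w + 2 * π * k by linarith]
    push_cast
    rw [add_mul, exp_add, show 2 * π * k * I = k * (2 * π * I) by ring,
      exp_int_mul_two_pi_mul_I, mul_one, ← add_mul]
  have hcw : cα * (‖w‖ * exp (arg w * I)) = -cβ := by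
    rw [norm_mul_exp_arg_mul_I]
    exact mul_div_cancel₀ _ hcα
  have hsP : ((‖w‖ * Q / P : ℝ) : ℂ) * P = ‖w‖ * Q := by
    rw [ofReal_div, div_mul_cancel₀ _ (ofReal_ne_zero.2 hP.ne'), ofReal_mul]
  rw [hA]
  linear_combination (cα * exp (B * I) * exp (arg w * I)) * hsP + (Q * exp (B * I)) * hcw

theorem not_psdStable_of_pos_mul_add_eq_zero {n : ℕ} {α β : SymVar n →₀ ℕ} {cα cβ : ℂ}
    (hdeg : mdeg β < mdeg α) {M : Matrix (Fin n) (Fin n) ℂ} (hM : M.IsSymm)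
    (hpos : (M.map im).PosDef) {s : ℝ} (hs : 0 < s)
    (h : s * evalMat M (monomial α cα) + evalMat M (monomial β cβ) = 0) :
    ¬ PsdStable (monomial α cα + monomial β cβ) := by
  intro hstable
  set t : ℝ := s ^ ((mdeg α - mdeg β : ℕ) : ℝ)⁻¹
  have ht : 0 < t := Real.rpow_pos_of_pos hs _
  have hts : (t : ℂ) ^ mdeg α = t ^ mdeg β * s := by
    rw [← Real.rpow_inv_natCast_pow hs.le (Nat.sub_pos_of_lt hdeg).ne']
    push_cast
    rw [← pow_add, Nat.add_sub_cancel' hdeg.le]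
  refine hstable ((t : ℂ) • M) (hM.smul _) ?_ ?_
  · convert hpos.smul ht using 1
    ext i j
    simp
  · have hx : (fun v : SymVar n => ((t : ℂ) • M) v.1.1 v.1.2) =
        (t : ℂ) • fun v => M v.1.1 v.1.2 := rfl
    simp only [evalMat, hx, map_add, eval_smul_monomial, ← mdeg_eq_degree, hts] at h ⊢
    linear_combination (t : ℂ) ^ mdeg β * h

theorem exists_isSymm_posDef_eval_monomial_eq {n : ℕ} {α β : SymVar n →₀ ℕ}
    (hαβ : Disjoint α.support β.support) (cα cβ : ℂ) {θ₁ θ₂ : ℝ} (h₁ : θ₁ ∈ Ioo 0 π)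
    (h₂ : θ₂ ∈ Ioo 0 π) :
    ∃ M : Matrix (Fin n) (Fin n) ℂ, M.IsSymm ∧ (M.map im).PosDef ∧
      (∃ P : ℝ, 0 < P ∧ evalMat M (monomial α cα) = cα * (P * exp (mdeg α * θ₁ * I))) ∧
      ∃ Q : ℝ, 0 < Q ∧ evalMat M (monomial β cβ) = cβ * (Q * exp (mdeg β * θ₂ * I)) := by
  classical
  set y : SymVar n → ℝ := fun v => if v ∈ α.support then θ₁ else θ₂
  have hy : ∀ v, 0 < Real.sin (y v) := fun v => by
    by_cases hv : v ∈ α.support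
    · simpa only [y, if_pos hv] using Real.sin_pos_of_pos_of_lt_pi h₁.1 h₁.2
    · simpa only [y, if_neg hv] using Real.sin_pos_of_pos_of_lt_pi h₂.1 h₂.2
  set h : SymVar n → ℝ := fun v => if v.1.1 = v.1.2 then 2 else 1
  -- the entry `ρ v * exp (y v * I)` has imaginary part `h v`
  set ρ : SymVar n → ℝ := fun v => h v / Real.sin (y v)
  have hρ : ∀ v, 0 < ρ v := fun v => div_pos (by simp only [h]; split_ifs <;> norm_num) (hy v)
  refine ⟨symMatrix fun v => ρ v * exp (y v * I), symMatrix_isSymm _, ?_, ?_, ?_⟩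
  · convert posDef_one_add_ones (ι := Fin n) using 1
    ext i j
    simp only [Matrix.map_apply, symMatrix, Matrix.of_apply, im_ofReal_mul,
      exp_ofReal_mul_I_im, ρ, div_mul_cancel₀ _ (hy _).ne', h, Matrix.add_apply, Matrix.one_apply]
    rcases eq_or_ne i j with rfl | hij
    · norm_num
    · simp [hij, (min_lt_max.2 hij).ne]
  · rw [evalMat_symMatrix, mdeg_eq_degree]
    exact exists_pos_eval_monomial_eq α cα hρ fun v hv => by simp only [y, if_pos hv]
  · rw [evalMat_symMatrix, mdeg_eq_degree]
    exact exists_pos_eval_monomial_eq β cβ hρ fun v hv => by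
      simp only [y, if_neg (Finset.disjoint_right.1 hαβ hv)]

/-- A binomial whose monomials have no common factor and whose total degrees
satisfy `deg Z^α > deg Z^β ≥ 1` is not psd-stable. -/
theorem non_homogeneous_binomial_not_psdStable {n : ℕ} (α β : SymVar n →₀ ℕ)
    (cα cβ : ℂ) (hcα : cα ≠ 0) (hcβ : cβ ≠ 0)
    (hnc : ∀ v : SymVar n, α v = 0 ∨ β v = 0)
    (hdeg : mdeg β < mdeg α) (hβ : 1 ≤ mdeg β) :
    ¬ PsdStable (monomial α cα + monomial β cβ) := by
  have hαβ : Disjoint α.support β.support := Finset.disjoint_left.2 fun v hvα hvβ =>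
    (hnc v).elim (Finsupp.mem_support_iff.1 hvα) (Finsupp.mem_support_iff.1 hvβ)
  have hab : (2 : ℝ) < mdeg α + mdeg β := by exact_mod_cast (by omega : 2 < mdeg α + mdeg β)
  obtain ⟨θ₁, h₁, θ₂, h₂, k, hθ⟩ := exists_mul_sub_mul_eq_add_int_mul_two_pi hab (arg (-cβ / cα))
  obtain ⟨M, hM, hpos, ⟨P, hP, hMα⟩, Q, hQ, hMβ⟩ :=
    exists_isSymm_posDef_eval_monomial_eq hαβ cα cβ h₁ h₂
  obtain ⟨s, hs, hzero⟩ := exists_pos_mul_add_eq_zero hcα hcβ hP hQ hθ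
  exact not_psdStable_of_pos_mul_add_eq_zero hdeg hM hpos hs (by push_cast at hzero; rwa [hMα, hMβ])
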